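/- arXiv:1902.07212 — 5 statements merged into one kernel-verified Lean document; each statement's English description precedes it below -/
import Mathlib

section
/- Let u, n ∈ ℝ² be linearly independent, and let w₁ = α₁·u + β₁·n and w₂ = α₂·u + β₂·n with β₁ > 0, β₂ > 0 and α₁·β₂ − α₂·β₁ < 0. If real numbers s₁, s₂, t₁, t₂ satisfy s₁·(−u) + s₂·u + t₁·w₁ + t₂·w₂ = 0, then sign(t₁) = sign(s₂ − s₁) and sign(t₂) = −sign(t₁). -/
/-- Lemma 4 ('small lemma'): at a vertex with two opposite collinear edges along
direction `u` (stresses `s₁`, `s₂`) and two further edges with directions `w₁, w₂`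
strictly on the same open side of the line `ℝ·u`, with `w₁` to the left of `w₂`,
the equilibrium condition forces `sign t₁ = sign (s₂ - s₁)` and `sign t₂ = -sign t₁`. -/
theorem universality_stressable_small_lemma
    (u n w₁ w₂ : EuclideanSpace ℝ (Fin 2)) (α₁ β₁ α₂ β₂ : ℝ)
    (hind : LinearIndependent ℝ ![u, n])
    (hw₁ : w₁ = α₁ • u + β₁ • n) (hw₂ : w₂ = α₂ • u + β₂ • n)
    (hβ₁ : 0 < β₁) (hβ₂ : 0 < β₂) (hdet : α₁ * β₂ - α₂ * β₁ < 0)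
    (s₁ s₂ t₁ t₂ : ℝ)
    (heq : s₁ • (-u) + s₂ • u + t₁ • w₁ + t₂ • w₂ = 0) :
    SignType.sign t₁ = SignType.sign (s₂ - s₁) ∧
      SignType.sign t₂ = -SignType.sign t₁ := by
  have key : (s₂ - s₁ + t₁ * α₁ + t₂ * α₂) • u + (t₁ * β₁ + t₂ * β₂) • n = 0 := by
    rw [← heq, hw₁, hw₂]
    simp only [smul_add, smul_smul, smul_neg, sub_smul, add_smul]
    abel
  obtain ⟨h1, h2⟩ := LinearIndependent.pair_iff.mp hind _ _ key
  have ht2 : t₂ = -(t₁ * β₁) / β₂ := by field_simp; linarith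
  have hs : s₂ - s₁ = t₁ * ((α₂ * β₁ - α₁ * β₂) / β₂) := by
    rw [ht2] at h1; field_simp at h1 ⊢; linarith
  have hc : 0 < (α₂ * β₁ - α₁ * β₂) / β₂ := div_pos (by linarith) hβ₂
  constructor
  · rw [hs, sign_mul, sign_pos hc, mul_one]
  · rw [ht2, neg_div, Left.sign_neg, neg_inj, div_eq_mul_inv, mul_assoc, sign_mul,
      sign_pos (by positivity : (0:ℝ) < β₁ * β₂⁻¹), mul_one]
end

section
/- Let G = (V, E) be a finite graph without loops or multiple edges, and let p, p' : V → ℝ² be two maps such that the sets of sign vectors of equilibrium stresses coincide: {sign ∘ s : s an equilibrium stress on (G, p)} = {sign ∘ s' : s' an equilibrium stress on (G, p')}, where sign ∘ s assigns to each edge the sign (+, −, or 0) of its stress. If p(a) ≠ p(b) for every edge {a, b} ∈ E, then also p'(a) ≠ p'(b) for every edge {a, b} ∈ E. -/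
/-- An equilibrium stress on a realization `p` of a simple graph `G` in the plane
(vector convention). -/
def IsEqStress {V : Type*} [Fintype V] (G : SimpleGraph V) [DecidableRel G.Adj]
    (p : V → EuclideanSpace ℝ (Fin 2)) (s : Sym2 V → ℝ) : Prop :=
  ∀ i : V, ∑ j : V, (if G.Adj i j then s s(i, j) else 0) • (p i - p j) = 0

/-- The 'in particular' part of Lemma 5: if two realizations of `G` have the same set of
sign vectors of equilibrium stresses and the first has no degenerate edges, then neither
does the second. -/
theorem no_degenerate_edges_of_same_sign_vectors
    {V : Type*} [Fintype V] (G : SimpleGraph V) [DecidableRel G.Adj]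
    (p p' : V → EuclideanSpace ℝ (Fin 2))
    (hsign :
      {σ : G.edgeSet → SignType |
        ∃ s : Sym2 V → ℝ, IsEqStress G p s ∧ σ = fun e => SignType.sign (s e.1)} =
      {σ : G.edgeSet → SignType |
        ∃ s : Sym2 V → ℝ, IsEqStress G p' s ∧ σ = fun e => SignType.sign (s e.1)})
    (hnd : ∀ x y : V, G.Adj x y → p x ≠ p y) :
    ∀ x y : V, G.Adj x y → p' x ≠ p' y := by
  intro a b hab hpe
  classical
  -- the stress supported on the single edge {a,b}
  set s' : Sym2 V → ℝ := fun e => if e = s(a, b) then 1 else 0 with hs'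
  have hmem : (fun e : G.edgeSet => SignType.sign (s' e.1)) ∈
      {σ : G.edgeSet → SignType |
        ∃ s : Sym2 V → ℝ, IsEqStress G p' s ∧ σ = fun e => SignType.sign (s e.1)} := by
    refine ⟨s', ?_, rfl⟩
    intro i
    apply Finset.sum_eq_zero
    intro j _
    by_cases hij : G.Adj i j
    · simp only [hij, if_true, hs']
      by_cases he : s(i, j) = s(a, b)
      · rw [Sym2.eq_iff] at he
        rcases he with ⟨rfl, rfl⟩ | ⟨rfl, rfl⟩
        · rw [hpe]; simp
        · rw [hpe]; simp
      · simp [he]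
    · simp [hij]
  rw [← hsign] at hmem
  obtain ⟨s, hs, hσ⟩ := hmem
  have hab' : s(a, b) ∈ G.edgeSet := hab
  have h1 : SignType.sign (s s(a, b)) = 1 := by
    have := congrFun hσ ⟨s(a, b), hab'⟩
    simpa [hs'] using this.symm
  have hspos : 0 < s s(a, b) := by
    rwa [sign_eq_one_iff] at h1
  have hzero : ∀ j : V, G.Adj a j → j ≠ b → s s(a, j) = 0 := by
    intro j hadj hjb
    have hne : s(a, j) ≠ s(a, b) := by
      intro he
      rw [Sym2.eq_iff] at he
      rcases he with ⟨-, h⟩ | ⟨h, -⟩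
      · exact hjb h
      · exact G.irrefl (h ▸ hab)
    have := congrFun hσ ⟨s(a, j), hadj⟩
    have h0 : SignType.sign (s s(a, j)) = 0 := by
      simpa [hs', hne] using this.symm
    rwa [sign_eq_zero_iff] at h0
  have key := hs a
  rw [Finset.sum_eq_single_of_mem b (Finset.mem_univ b)] at key
  · simp only [hab, if_true] at key
    rcases smul_eq_zero.mp key with h | h
    · exact absurd h (ne_of_gt hspos)
    · exact hnd a b hab (sub_eq_zero.mp h)
  · intro j _ hjb
    by_cases hadj : G.Adj a j
    · simp [hadj, hzero j hadj hjb]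
    · simp [hadj]
end

section
/- Let S and S' be linear subspaces of ℝⁿ such that the sets of componentwise sign vectors coincide: {(sign(x₁), …, sign(xₙ)) : x ∈ S} = {(sign(x'₁), …, sign(x'ₙ)) : x' ∈ S'}. Then there exists a homeomorphism h : S → S' such that sign(h(x)ᵢ) = sign(xᵢ) for every x ∈ S and every coordinate i. -/
/-!
Call `v` a covector of a subspace `A` if it is the sign vector of some point of `A`, and fix a
representative `rep A v ∈ A` of each covector. Every `x ∈ A` is, in exactly one way, a positive
combination `∑ c v • rep A v` over a flag, i.e. a chain of nonzero covectors in the conformal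
order: subtract from `x` the largest multiple of `rep A (sgn x)` that leaves a remainder conformal
to `sgn x`, which kills a coordinate, and recurse. The sign vector of such a combination is the
top of its flag, so replacing every `rep A v` by `rep B v` preserves signs; the resulting map is
inverted by the same construction from `B` to `A`. It is linear on each of the finitely many
flag cones, which are closed because the representatives along a flag are linearly independent,
so it is continuous.
-/

open Finset

namespace SignVector

variable {ι : Type*}

noncomputable def sgn (x : ι → ℝ) : ι → SignType := fun i => SignType.sign (x i)

@[simp] lemma sgn_apply (x : ι → ℝ) (i : ι) : sgn x i = SignType.sign (x i) := rfl

@[simp] lemma sgn_zero : sgn (0 : ι → ℝ) = 0 := funext fun _ => sign_zero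

lemma sgn_eq_zero_iff {x : ι → ℝ} : sgn x = 0 ↔ x = 0 := by
  simp only [funext_iff, sgn_apply, Pi.zero_apply, sign_eq_zero_iff]

lemma sgn_smul_of_pos {c : ℝ} (hc : 0 < c) (x : ι → ℝ) : sgn (c • x) = sgn x := by
  ext i
  simp [sign_mul, sign_pos hc]

def Conformal (v w : ι → SignType) : Prop := ∀ i, v i = 0 ∨ v i = w i

lemma Conformal.refl (v : ι → SignType) : Conformal v v := fun _ => Or.inr rfl

lemma Conformal.trans {u v w : ι → SignType} (huv : Conformal u v) (hvw : Conformal v w) :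
    Conformal u w := fun i =>
  (huv i).elim Or.inl fun h => (hvw i).imp h.trans h.trans

lemma Conformal.zero (v : ι → SignType) : Conformal 0 v := fun _ => Or.inl rfl

lemma sign_add_of_sign_eq {a b : ℝ} {s : SignType} (ha : SignType.sign a = s)
    (hb : SignType.sign b = 0 ∨ SignType.sign b = s) : SignType.sign (a + b) = s := by
  rcases hb with hb | hb
  · rw [sign_eq_zero_iff.1 hb, add_zero, ha]
  · subst ha
    rcases lt_trichotomy a 0 with h | h | h
    · rw [sign_neg h, sign_eq_neg_one_iff] at hb ⊢; linarith
    · rw [h, sign_zero, sign_eq_zero_iff] at hb ⊢; linarith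
    · rw [sign_pos h, sign_eq_one_iff] at hb ⊢; linarith

lemma sign_sub_mul_iff {a b μ : ℝ} (hb : b ≠ 0) :
    (SignType.sign (a - μ * b) = 0 ∨ SignType.sign (a - μ * b) = SignType.sign b) ↔
      μ ≤ a / b := by
  have hsb : SignType.sign b ≠ 0 := by simpa using hb
  have : a - μ * b = b * (a / b - μ) := by field_simp
  rw [this, sign_mul, mul_eq_zero, mul_eq_left₀ hsb, or_iff_right hsb, ← sub_nonneg,
    le_iff_eq_or_lt, sign_eq_zero_iff, sign_eq_one_iff, eq_comm]

lemma sgn_add_of_conformal {x y : ι → ℝ} (hy : Conformal (sgn y) (sgn x)) :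
    sgn (x + y) = sgn x :=
  funext fun i => sign_add_of_sign_eq rfl (hy i)

lemma conformal_sgn_sum {κ : Type*} {s : Finset κ} {f : κ → ι → ℝ} {w : ι → SignType}
    (h : ∀ j ∈ s, Conformal (sgn (f j)) w) : Conformal (sgn (∑ j ∈ s, f j)) w := by
  intro i
  simp only [sgn_apply, Finset.sum_apply]
  refine Finset.sum_induction _ (fun y => SignType.sign y = 0 ∨ SignType.sign y = w i)
    (fun a b ha hb => ?_) (Or.inl sign_zero) (fun j hj => h j hj i)
  rcases ha with ha | ha
  · rwa [sign_eq_zero_iff.1 ha, zero_add]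
  · exact Or.inr (sign_add_of_sign_eq ha hb)

lemma conformal_sgn_smul {c : ℝ} (hc : 0 ≤ c) {x : ι → ℝ} {w : ι → SignType}
    (hx : Conformal (sgn x) w) : Conformal (sgn (c • x)) w := by
  rcases hc.eq_or_lt with rfl | hc
  · simpa using Conformal.zero w
  · rwa [sgn_smul_of_pos hc]

lemma exists_top_of_isChain {t : Finset (ι → SignType)}
    (ht : IsChain Conformal (t : Set (ι → SignType))) (hne : t.Nonempty) :
    ∃ m ∈ t, ∀ w ∈ t, Conformal w m := by
  classical
  induction t using Finset.induction_on with
  | empty => simp at hne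
  | insert v t _ ih =>
    rcases t.eq_empty_or_nonempty with rfl | htne
    · exact ⟨v, by simp, by simp [Conformal.refl]⟩
    obtain ⟨m, hm, hmax⟩ := ih (ht.mono (by simp)) htne
    have hvm : Conformal v m ∨ Conformal m v :=
      (eq_or_ne v m).elim (fun h => Or.inl (h ▸ Conformal.refl v))
        (ht (by simp) (by simp [hm]))
    rcases hvm with hvm | hmv
    · exact ⟨m, by simp [hm], by simpa [hvm] using hmax⟩
    · exact ⟨v, by simp, by simpa [Conformal.refl] using fun w hw => (hmax w hw).trans hmv⟩

lemma exists_apply_ne_zero_of_isChain {t : Finset (ι → SignType)}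
    (ht : IsChain Conformal (t : Set (ι → SignType))) {m : ι → SignType} (hm0 : m ≠ 0)
    (htop : ∀ w ∈ t, Conformal w m) : ∃ i, m i ≠ 0 ∧ ∀ w ∈ t, w ≠ m → w i = 0 := by
  classical
  rcases (t.erase m).eq_empty_or_nonempty with hempty | hne
  · obtain ⟨i, hi⟩ := Function.ne_iff.1 hm0
    refine ⟨i, hi, fun w hw hwm => ?_⟩
    simpa [hempty] using mem_erase.2 ⟨hwm, hw⟩
  obtain ⟨w₀, hw₀, hbelow⟩ := exists_top_of_isChain (ht.mono (by simp)) hne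
  obtain ⟨i, hi⟩ := Function.ne_iff.1 (mem_erase.1 hw₀).1
  have hw₀i : w₀ i = 0 := ((htop w₀ (mem_of_mem_erase hw₀)) i).resolve_right hi
  refine ⟨i, fun h => hi (hw₀i.trans h.symm), fun w hw hwm => ?_⟩
  rcases hbelow w (mem_erase.2 ⟨hwm, hw⟩) i with h | h
  · exact h
  · exact h.trans hw₀i

lemma sum_filter_pos_smul {κ M : Type*} [AddCommMonoid M] [Module ℝ M] {t : Finset κ}
    {c : κ → ℝ} (hc : ∀ v ∈ t, 0 ≤ c v) (a : κ → M) :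
    ∑ v ∈ t with 0 < c v, c v • a v = ∑ v ∈ t, c v • a v :=
  sum_filter_of_ne fun v hv h => (hc v hv).lt_of_ne fun h0 => h (by rw [← h0, zero_smul])

structure IsFlag (a : (ι → SignType) → ι → ℝ) (t : Finset (ι → SignType)) : Prop where
  isChain : IsChain Conformal (t : Set (ι → SignType))
  sgn_eq : ∀ v ∈ t, sgn (a v) = v
  ne_zero : ∀ v ∈ t, v ≠ 0

namespace IsFlag

variable {a : (ι → SignType) → ι → ℝ} {s t : Finset (ι → SignType)} {c d : (ι → SignType) → ℝ}
  {m : ι → SignType}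

lemma subset (ht : IsFlag a t) (hst : s ⊆ t) : IsFlag a s :=
  ⟨ht.isChain.mono (by simpa using hst), fun v hv => ht.sgn_eq v (hst hv),
    fun v hv => ht.ne_zero v (hst hv)⟩

lemma conformal_sgn_sum (ht : IsFlag a t) (hc : ∀ v ∈ t, 0 ≤ c v)
    (htop : ∀ w ∈ t, Conformal w m) : Conformal (sgn (∑ v ∈ t, c v • a v)) m :=
  SignVector.conformal_sgn_sum fun v hv =>
    conformal_sgn_smul (hc v hv) ((ht.sgn_eq v hv).symm ▸ htop v hv)

lemma sgn_sum (ht : IsFlag a t) (hc : ∀ v ∈ t, 0 < c v) (hm : m ∈ t)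
    (htop : ∀ w ∈ t, Conformal w m) : sgn (∑ v ∈ t, c v • a v) = m := by
  classical
  have hsm : sgn (c m • a m) = m := by rw [sgn_smul_of_pos (hc m hm), ht.sgn_eq m hm]
  have hrest : Conformal (sgn (∑ v ∈ t.erase m, c v • a v)) (sgn (c m • a m)) := by
    rw [hsm]
    exact (ht.subset (erase_subset m t)).conformal_sgn_sum
        (fun v hv => (hc v (mem_of_mem_erase hv)).le) (fun w hw => htop w (mem_of_mem_erase hw))
  rw [← add_sum_erase t _ hm, sgn_add_of_conformal hrest, hsm]

lemma sum_eq_zero_iff (ht : IsFlag a t) (hc : ∀ v ∈ t, 0 < c v) :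
    ∑ v ∈ t, c v • a v = 0 ↔ t = ∅ := by
  refine ⟨fun h => ?_, fun h => by simp [h]⟩
  by_contra hne
  obtain ⟨m, hm, htop⟩ := exists_top_of_isChain ht.isChain (nonempty_iff_ne_empty.2 hne)
  exact ht.ne_zero m hm (by rw [← ht.sgn_sum hc hm htop, h, sgn_zero])

lemma sgn_sum_eq {b : (ι → SignType) → ι → ℝ} (ha : IsFlag a t) (hb : IsFlag b t)
    (hc : ∀ v ∈ t, 0 < c v) : sgn (∑ v ∈ t, c v • a v) = sgn (∑ v ∈ t, c v • b v) := by
  rcases t.eq_empty_or_nonempty with rfl | hne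
  · simp
  obtain ⟨m, hm, htop⟩ := exists_top_of_isChain ha.isChain hne
  rw [ha.sgn_sum hc hm htop, hb.sgn_sum hc hm htop]

lemma exists_apply_sum_eq (ht : IsFlag a t) (hm : m ∈ t) (htop : ∀ w ∈ t, Conformal w m) :
    ∃ i, a m i ≠ 0 ∧ (∑ v ∈ t, c v • a v) i = c m * a m i := by
  obtain ⟨i, hmi, hvanish⟩ := exists_apply_ne_zero_of_isChain ht.isChain (ht.ne_zero m hm) htop
  have happly : ∀ v ∈ t, SignType.sign (a v i) = v i := fun v hv => congrFun (ht.sgn_eq v hv) i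
  refine ⟨i, fun h => hmi (by rw [← happly m hm, h, sign_zero]), ?_⟩
  rw [Finset.sum_apply, sum_eq_single_of_mem m hm]
  · rfl
  · intro v hv hvm
    simp [sign_eq_zero_iff.1 ((happly v hv).trans (hvanish v hv hvm))]

lemma coeff_top_le {x : ι → ℝ} (ht : IsFlag a t) (hs : IsFlag a s) (hd : ∀ v ∈ s, 0 ≤ d v)
    (hxt : ∑ v ∈ t, c v • a v = x) (hxs : ∑ v ∈ s, d v • a v = x)
    (hmt : m ∈ t) (htop : ∀ w ∈ t, Conformal w m) (hms : m ∈ s)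
    (htop' : ∀ w ∈ s, Conformal w m) : d m ≤ c m := by
  classical
  obtain ⟨i, hami, hxi⟩ := ht.exists_apply_sum_eq (c := c) hmt htop
  have hrest : Conformal (sgn (x - d m • a m)) m := by
    rw [← hxs, ← add_sum_erase s _ hms, add_sub_cancel_left]
    exact (hs.subset (erase_subset m s)).conformal_sgn_sum
      (fun v hv => hd v (mem_of_mem_erase hv)) (fun w hw => htop' w (mem_of_mem_erase hw))
  have hi := hrest i
  rw [← congrFun (hs.sgn_eq m hms) i] at hi
  simp only [sgn_apply, Pi.sub_apply, Pi.smul_apply, smul_eq_mul] at hi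
  rw [← hxt, hxi] at hi
  simpa [hami] using (sign_sub_mul_iff hami).1 hi


theorem sum_unique (ht : IsFlag a t) (hs : IsFlag a s) (hc : ∀ v ∈ t, 0 < c v)
    (hd : ∀ v ∈ s, 0 < d v) (h : ∑ v ∈ t, c v • a v = ∑ v ∈ s, d v • a v) :
    t = s ∧ ∀ v ∈ t, c v = d v := by
  classical
  induction t using Finset.strongInduction generalizing s with
  | H t ih =>
  rcases t.eq_empty_or_nonempty with rfl | htne
  · simp [(hs.sum_eq_zero_iff hd).1 (by simpa using h.symm)]
  have hsne : s.Nonempty := by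
    rw [nonempty_iff_ne_empty, ne_eq, ← hs.sum_eq_zero_iff hd, ← h, ht.sum_eq_zero_iff hc]
    exact htne.ne_empty
  obtain ⟨m, hm, htop⟩ := exists_top_of_isChain ht.isChain htne
  obtain ⟨m', hm', htop'⟩ := exists_top_of_isChain hs.isChain hsne
  -- Both tops are `sgn x`, and its coefficient is the largest `μ` for which `x - μ • a m` stays
  -- conformal to `m`.
  obtain rfl : m = m' := by rw [← ht.sgn_sum hc hm htop, h, hs.sgn_sum hd hm' htop']
  have hcd : c m = d m := le_antisymm
    (hs.coeff_top_le ht (fun v hv => (hc v hv).le) h.symm rfl hm' htop' hm htop)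
    (ht.coeff_top_le hs (fun v hv => (hd v hv).le) h rfl hm htop hm' htop')
  have hrest : ∑ v ∈ t.erase m, c v • a v = ∑ v ∈ s.erase m, d v • a v := by
    rwa [← add_sum_erase t _ hm, ← add_sum_erase s _ hm', hcd, add_right_inj] at h
  obtain ⟨herase, hcoeff⟩ := ih (t.erase m) (erase_ssubset hm) (ht.subset (erase_subset m t))
    (hs.subset (erase_subset m s)) (fun v hv => hc v (mem_of_mem_erase hv))
    (fun v hv => hd v (mem_of_mem_erase hv)) hrest
  refine ⟨by rw [← insert_erase hm, herase, insert_erase hm'], fun v hv => ?_⟩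
  rcases eq_or_ne v m with rfl | hvm
  · exact hcd
  · exact hcoeff v (mem_erase.2 ⟨hvm, hv⟩)

theorem linearIndepOn (ht : IsFlag a t) : LinearIndepOn ℝ a (t : Set (ι → SignType)) := by
  classical
  rw [linearIndepOn_finset_iffₛ]
  intro f g hfg
  have hpq : ∑ v ∈ t with 0 < (f v - g v)⁺, (f v - g v)⁺ • a v =
      ∑ v ∈ t with 0 < (f v - g v)⁻, (f v - g v)⁻ • a v := by
    rw [sum_filter_pos_smul (fun v _ => posPart_nonneg _),
      sum_filter_pos_smul (fun v _ => negPart_nonneg _), ← sub_eq_zero, ← sum_sub_distrib]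
    simp_rw [← sub_smul, posPart_sub_negPart, sub_smul, sum_sub_distrib, hfg, sub_self]
  obtain ⟨heq, -⟩ := (ht.subset (filter_subset _ t)).sum_unique (ht.subset (filter_subset _ t))
    (fun v hv => (mem_filter.1 hv).2) (fun v hv => (mem_filter.1 hv).2) hpq
  intro v hv
  have hle : ¬ g v < f v := fun hlt => by
    have := (mem_filter.1 (heq ▸ mem_filter.2 ⟨hv, posPart_pos_iff.2 (sub_pos.2 hlt)⟩)).2
    linarith [negPart_pos_iff.1 this]
  have hge : ¬ f v < g v := fun hlt => by
    have := (mem_filter.1 (heq.symm ▸ mem_filter.2 ⟨hv, negPart_pos_iff.2 (sub_neg.2 hlt)⟩)).2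
    linarith [posPart_pos_iff.1 this]
  exact le_antisymm (not_lt.1 hle) (not_lt.1 hge)

lemma conformal_sgn_sum_of_mem (ht : IsFlag a t) (hc : ∀ v ∈ t, 0 < c v) {w : ι → SignType}
    (hw : w ∈ t) : Conformal w (sgn (∑ v ∈ t, c v • a v)) := by
  obtain ⟨m, hm, htop⟩ := exists_top_of_isChain ht.isChain ⟨w, hw⟩
  rw [ht.sgn_sum hc hm htop]
  exact htop w hw

lemma insert [DecidableEq (ι → SignType)] (ht : IsFlag a t) {v : ι → SignType}
    (hv : sgn (a v) = v) (hv0 : v ≠ 0) (hbelow : ∀ w ∈ t, Conformal w v) :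
    IsFlag a (insert v t) := by
  refine ⟨?_, fun w hw => ?_, fun w hw => ?_⟩
  · rw [coe_insert]
    exact ht.isChain.insert fun w hw _ => Or.inr (hbelow w hw)
  · rcases mem_insert.1 hw with rfl | hw
    exacts [hv, ht.sgn_eq w hw]
  · rcases mem_insert.1 hw with rfl | hw
    exacts [hv0, ht.ne_zero w hw]

lemma injective_linearCombination (ht : IsFlag a t) :
    Function.Injective (Fintype.linearCombination ℝ fun v : t => a v) :=
  linearIndependent_iff_injective_fintypeLinearCombination.1 ht.linearIndepOn

end IsFlag

lemma exists_sub_smul_conformal [Fintype ι] {x b : ι → ℝ} (hb : sgn b = sgn x) (hx : x ≠ 0) :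
    ∃ μ : ℝ, 0 < μ ∧ Conformal (sgn (x - μ • b)) (sgn x) ∧ ∃ i, x i ≠ 0 ∧ (x - μ • b) i = 0 := by
  classical
  have hsign : ∀ i, SignType.sign (b i) = SignType.sign (x i) := congrFun hb
  have hb0 : ∀ i, x i ≠ 0 → b i ≠ 0 := fun i hxi hbi => hxi (by simpa [hbi] using (hsign i).symm)
  have hsupp : ({i | x i ≠ 0} : Finset ι).Nonempty := by
    obtain ⟨i, hi⟩ := Function.ne_iff.1 hx
    exact ⟨i, by simpa using hi⟩
  have hratio : ∀ i ∈ ({i | x i ≠ 0} : Finset ι), ∀ μ, μ ≤ x i / b i ↔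
      (SignType.sign (x i - μ * b i) = 0 ∨ SignType.sign (x i - μ * b i) = SignType.sign (x i)) :=
    fun i hi μ => by rw [← hsign, sign_sub_mul_iff (hb0 i (mem_filter.1 hi).2)]
  set μ := ({i | x i ≠ 0} : Finset ι).inf' hsupp fun i => x i / b i
  refine ⟨μ, (lt_inf'_iff _).2 fun i hi => ?_, fun i => ?_, ?_⟩
  · have hxi := (mem_filter.1 hi).2
    exact ((hratio i hi 0).2 (by simp)).lt_of_ne (div_ne_zero hxi (hb0 i hxi)).symm
  · by_cases hxi : x i = 0
    · have hbi : b i = 0 := by simpa [hxi] using hsign i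
      simp [hxi, hbi]
    · simpa using (hratio i (by simpa using hxi) μ).1 (inf'_le _ (by simpa using hxi))
  · obtain ⟨i, hi, hμ⟩ := exists_mem_eq_inf' hsupp fun i => x i / b i
    refine ⟨i, (mem_filter.1 hi).2, ?_⟩
    simp [μ, hμ, div_mul_cancel₀ _ (hb0 i (mem_filter.1 hi).2)]

lemma card_support_lt_of_conformal [Fintype ι] {x y : ι → ℝ} (h : Conformal (sgn y) (sgn x))
    {i : ι} (hxi : x i ≠ 0) (hyi : y i = 0) :
    #{j | y j ≠ 0} < #{j | x j ≠ 0} := by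
  refine card_lt_card
    ((ssubset_iff_of_subset fun j hj => ?_).2 ⟨i, by simpa using hxi, by simp [hyi]⟩)
  have hyj : SignType.sign (y j) ≠ 0 := by simpa using (mem_filter.1 hj).2
  have hxj : sgn x j ≠ 0 := (h j).resolve_left hyj ▸ hyj
  simpa using hxj

noncomputable def rep (A : Submodule ℝ (ι → ℝ)) (v : ι → SignType) : ι → ℝ :=
  Classical.epsilon fun x => x ∈ A ∧ sgn x = v

lemma rep_spec {A : Submodule ℝ (ι → ℝ)} {v : ι → SignType}
    (hv : v ∈ sgn '' (A : Set (ι → ℝ))) : rep A v ∈ A ∧ sgn (rep A v) = v := by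
  obtain ⟨x, hx, rfl⟩ := hv
  exact Classical.epsilon_spec (p := fun y => y ∈ A ∧ sgn y = sgn x) ⟨x, hx, rfl⟩

theorem exists_isFlag_sum_eq [Fintype ι] {A : Submodule ℝ (ι → ℝ)} {x : ι → ℝ} (hx : x ∈ A) :
    ∃ (t : Finset (ι → SignType)) (c : (ι → SignType) → ℝ), IsFlag (rep A) t ∧
      (t : Set (ι → SignType)) ⊆ sgn '' (A : Set (ι → ℝ)) ∧ (∀ v ∈ t, 0 < c v) ∧
      ∑ v ∈ t, c v • rep A v = x := by
  classical
  induction hk : #{i | x i ≠ 0} using Nat.strong_induction_on generalizing x with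
  | _ k ih =>
  rcases eq_or_ne x 0 with rfl | hx0
  · exact ⟨∅, 0, ⟨by simp, by simp, by simp⟩, by simp, by simp, by simp⟩
  have hxA : sgn x ∈ sgn '' (A : Set (ι → ℝ)) := ⟨x, hx, rfl⟩
  obtain ⟨hbA, hb⟩ := rep_spec hxA
  obtain ⟨μ, hμ, hconf, i, hxi, hri⟩ := exists_sub_smul_conformal hb hx0
  obtain ⟨t, c, ht, htA, hc, hr⟩ := ih _ (hk ▸ card_support_lt_of_conformal hconf hxi hri)
    (A.sub_mem hx (A.smul_mem μ hbA)) rfl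
  have hbelow_r : ∀ w ∈ t, Conformal w (sgn (x - μ • rep A (sgn x))) := fun w hw =>
    hr ▸ ht.conformal_sgn_sum_of_mem hc hw
  have hbelow : ∀ w ∈ t, Conformal w (sgn x) := fun w hw => (hbelow_r w hw).trans hconf
  have hnotin : sgn x ∉ t := fun hmem => by
    have := hbelow_r _ hmem i
    simp [hri, hxi] at this
  refine ⟨insert (sgn x) t, Function.update c (sgn x) μ,
    ht.insert hb (fun h => hx0 (sgn_eq_zero_iff.1 h)) hbelow, ?_, ?_, ?_⟩
  · rw [coe_insert]
    exact Set.insert_subset hxA htA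
  · intro v hv
    rcases mem_insert.1 hv with rfl | hv
    · simpa using hμ
    · simpa [ne_of_mem_of_not_mem hv hnotin] using hc v hv
  · rw [sum_insert hnotin, Function.update_self,
      sum_congr rfl fun v hv => by rw [Function.update_of_ne (ne_of_mem_of_not_mem hv hnotin)],
      hr, add_sub_cancel]

/-- The positive flag decomposition of `x` along `a` (unique by `IsFlag.sum_unique`), with every
`a v` replaced by `b v`; a junk value when `x` has no such decomposition. -/
noncomputable def transport (a b : (ι → SignType) → ι → ℝ) (x : ι → ℝ) : ι → ℝ :=
  let p := Classical.epsilon fun p : Finset (ι → SignType) × ((ι → SignType) → ℝ) =>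
    IsFlag a p.1 ∧ (∀ v ∈ p.1, 0 < p.2 v) ∧ ∑ v ∈ p.1, p.2 v • a v = x
  ∑ v ∈ p.1, p.2 v • b v

def flagCone (a : (ι → SignType) → ι → ℝ) (t : Finset (ι → SignType)) : Set (ι → ℝ) :=
  {x | ∃ c : (ι → SignType) → ℝ, (∀ v ∈ t, 0 ≤ c v) ∧ ∑ v ∈ t, c v • a v = x}

lemma linearCombination_restrict (a : (ι → SignType) → ι → ℝ) (t : Finset (ι → SignType))
    (c : (ι → SignType) → ℝ) :
    Fintype.linearCombination ℝ (fun v : t => a v) (fun v => c v) = ∑ v ∈ t, c v • a v := by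
  rw [Fintype.linearCombination_apply, sum_coe_sort t fun v => c v • a v]

namespace IsFlag

variable {a b : (ι → SignType) → ι → ℝ} {t : Finset (ι → SignType)} {c : (ι → SignType) → ℝ}

lemma transport_sum (ht : IsFlag a t) (hc : ∀ v ∈ t, 0 < c v) :
    transport a b (∑ v ∈ t, c v • a v) = ∑ v ∈ t, c v • b v := by
  obtain ⟨hp, hpc, hpsum⟩ := Classical.epsilon_spec
    (p := fun p : Finset (ι → SignType) × ((ι → SignType) → ℝ) =>
      IsFlag a p.1 ∧ (∀ v ∈ p.1, 0 < p.2 v) ∧ ∑ v ∈ p.1, p.2 v • a v = ∑ v ∈ t, c v • a v)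
    ⟨(t, c), ht, hc, rfl⟩
  obtain ⟨heq, hcoeff⟩ := hp.sum_unique ht hpc hc hpsum
  rw [transport]
  rw [heq] at hcoeff ⊢
  exact sum_congr rfl fun v hv => by rw [hcoeff v hv]

lemma transport_sum_of_nonneg (ht : IsFlag a t) (hc : ∀ v ∈ t, 0 ≤ c v) :
    transport a b (∑ v ∈ t, c v • a v) = ∑ v ∈ t, c v • b v := by
  classical
  rw [← sum_filter_pos_smul hc a, ← sum_filter_pos_smul hc b]
  exact (ht.subset (filter_subset _ t)).transport_sum fun v hv => (mem_filter.1 hv).2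

lemma isClosed_flagCone [Finite ι] (ht : IsFlag a t) : IsClosed (flagCone a t) := by
  classical
  have hcone : flagCone a t = Fintype.linearCombination ℝ (fun v : t => a v) '' Set.Ici 0 := by
    ext x
    constructor
    · rintro ⟨c, hc, rfl⟩
      exact ⟨fun v => c v, fun v => hc v v.2, linearCombination_restrict a t c⟩
    · rintro ⟨g, hg, rfl⟩
      refine ⟨fun v => if h : v ∈ t then g ⟨v, h⟩ else 0,
        fun v hv => by simpa [hv] using hg ⟨v, hv⟩, ?_⟩
      rw [← linearCombination_restrict]
      simp
  rw [hcone]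
  exact (LinearMap.isClosedEmbedding_of_injective (LinearMap.ker_eq_bot.2
    ht.injective_linearCombination)).isClosedMap _ isClosed_Ici

lemma continuousOn_transport [Finite ι] (ht : IsFlag a t) (b : (ι → SignType) → ι → ℝ) :
    ContinuousOn (transport a b) (flagCone a t) := by
  obtain ⟨P, hP⟩ := LinearMap.exists_leftInverse_of_injective _
    (LinearMap.ker_eq_bot.2 ht.injective_linearCombination)
  set M := Fintype.linearCombination ℝ (fun v : t => b v) ∘ₗ P
  refine M.continuous_of_finiteDimensional.continuousOn.congr ?_
  rintro x ⟨c, hc, rfl⟩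
  rw [ht.transport_sum_of_nonneg hc, ← linearCombination_restrict a, LinearMap.comp_apply,
    ← LinearMap.comp_apply P, hP, LinearMap.id_apply, linearCombination_restrict]

end IsFlag

lemma continuousOn_transport [Finite ι] (a b : (ι → SignType) → ι → ℝ) :
    ContinuousOn (transport a b)
      (⋃ t : {t : Finset (ι → SignType) // IsFlag a t}, flagCone a t) :=
  (locallyFinite_of_finite _).continuousOn_iUnion (fun t => t.2.isClosed_flagCone)
    fun t => t.2.continuousOn_transport b

theorem transport_rep_spec [Fintype ι] {A B : Submodule ℝ (ι → ℝ)}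
    (hAB : sgn '' (A : Set (ι → ℝ)) = sgn '' (B : Set (ι → ℝ))) {x : ι → ℝ} (hx : x ∈ A) :
    transport (rep A) (rep B) x ∈ B ∧ sgn (transport (rep A) (rep B) x) = sgn x ∧
      transport (rep B) (rep A) (transport (rep A) (rep B) x) = x := by
  obtain ⟨t, c, ht, htA, hc, rfl⟩ := exists_isFlag_sum_eq hx
  have htB : ∀ v ∈ t, v ∈ sgn '' (B : Set (ι → ℝ)) := fun v hv => hAB ▸ htA hv
  have htB' : IsFlag (rep B) t := ⟨ht.isChain, fun v hv => (rep_spec (htB v hv)).2, ht.ne_zero⟩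
  rw [ht.transport_sum hc, htB'.transport_sum hc]
  exact ⟨B.sum_mem fun v hv => B.smul_mem _ (rep_spec (htB v hv)).1,
    (ht.sgn_sum_eq htB' hc).symm, rfl⟩

theorem continuousOn_transport_rep [Fintype ι] (A : Submodule ℝ (ι → ℝ))
    (b : (ι → SignType) → ι → ℝ) : ContinuousOn (transport (rep A) b) A :=
  (continuousOn_transport (rep A) b).mono fun x hx => by
    obtain ⟨t, c, ht, -, hc, rfl⟩ := exists_isFlag_sum_eq hx
    exact Set.mem_iUnion.2 ⟨⟨t, ht⟩, c, fun v hv => (hc v hv).le, rfl⟩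

end SignVector

/-- Proposition 5 (strong equivalence equals weak equivalence), mathematical content:
two linear subspaces of `ℝⁿ` with the same set of componentwise sign vectors admit a
sign-preserving homeomorphism. -/
theorem sign_preserving_homeomorph_of_same_sign_vectors
    (n : ℕ) (S S' : Submodule ℝ (Fin n → ℝ))
    (hsign :
      {v : Fin n → SignType | ∃ x ∈ S, ∀ i, SignType.sign (x i) = v i} =
      {v : Fin n → SignType | ∃ x ∈ S', ∀ i, SignType.sign (x i) = v i}) :
    ∃ h : S ≃ₜ S', ∀ (x : S) (i : Fin n),
      SignType.sign ((h x : Fin n → ℝ) i) = SignType.sign ((x : Fin n → ℝ) i) := by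
  open SignVector in
  have hcov : sgn '' (S : Set (Fin n → ℝ)) = sgn '' (S' : Set (Fin n → ℝ)) := by
    ext v
    simpa [funext_iff] using Set.ext_iff.1 hsign v
  have hS := fun x : S => transport_rep_spec hcov x.2
  have hS' := fun y : S' => transport_rep_spec hcov.symm y.2
  exact ⟨{ toFun x := ⟨transport (rep S) (rep S') x, (hS x).1⟩
           invFun y := ⟨transport (rep S') (rep S) y, (hS' y).1⟩
           left_inv x := Subtype.ext (hS x).2.2
           right_inv y := Subtype.ext (hS' y).2.2
           continuous_toFun := ((continuousOn_transport_rep S _).comp_continuous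
             continuous_subtype_val Subtype.prop).subtype_mk _
           continuous_invFun := ((continuousOn_transport_rep S' _).comp_continuous
             continuous_subtype_val Subtype.prop).subtype_mk _ },
    fun x i => congrFun (hS x).2.1 i⟩
end

section
/- Let p₁, p₂, p₃ ∈ ℝ² be three pairwise distinct collinear points with p₂ strictly between p₁ and p₃. Then the space of equilibrium stresses on the triangle graph K₃ realized by these points is one-dimensional, and every nonzero equilibrium stress s satisfies sign(s({1,2})) = sign(s({2,3})) = −sign(s({1,3})) with all three values nonzero. -/
/-!
Write the points as `p i = x + w i • v` with `w = ![0, t, 1]` and `v = p 2 - p 0 ≠ 0`.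
Since every difference `p i - p j` is a multiple of `v`, the planar equilibrium equations
reduce to the scalar ones for the coordinates `w`, whose solutions are the multiples of
`(s₀₁, s₁₂, s₀₂) = (1 - t, t, -t(1 - t))`. For `0 < t < 1` these three entries are nonzero,
the first two positive and the last negative.
-/

/-- An equilibrium stress on the triangle graph `K₃` realized by `p : Fin 3 → ℝ²`
(vector convention), encoded as a symmetric matrix vanishing on the diagonal. -/
def IsK3Stress (p : Fin 3 → EuclideanSpace ℝ (Fin 2))
    (s : Fin 3 → Fin 3 → ℝ) : Prop :=
  (∀ i j, s i j = s j i) ∧ (∀ i, s i i = 0) ∧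
    ∀ i, ∑ j, s i j • (p i - p j) = 0

def k3Weights (a b c : ℝ) : Fin 3 → Fin 3 → ℝ :=
  ![![0, a, c], ![a, 0, b], ![c, b, 0]]

theorem eq_k3Weights {s : Fin 3 → Fin 3 → ℝ} (hsym : ∀ i j, s i j = s j i)
    (hdiag : ∀ i, s i i = 0) : s = k3Weights (s 0 1) (s 1 2) (s 0 2) := by
  funext i j
  fin_cases i <;> fin_cases j <;> simp [k3Weights, hdiag, hsym 1 0, hsym 2 0, hsym 2 1]

theorem smul_k3Weights (l a b c : ℝ) :
    l • k3Weights a b c = k3Weights (l * a) (l * b) (l * c) := by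
  funext i j
  fin_cases i <;> fin_cases j <;> simp [k3Weights]

theorem isK3Stress_iff_of_eq_add_smul {p : Fin 3 → EuclideanSpace ℝ (Fin 2)}
    {x v : EuclideanSpace ℝ (Fin 2)} {w : Fin 3 → ℝ} (hv : v ≠ 0)
    (hp : ∀ i, p i = x + w i • v) {s : Fin 3 → Fin 3 → ℝ} :
    IsK3Stress p s ↔
      (∀ i j, s i j = s j i) ∧ (∀ i, s i i = 0) ∧ ∀ i, ∑ j, s i j * (w i - w j) = 0 := by
  have hsum : ∀ i, ∑ j, s i j • (p i - p j) = (∑ j, s i j * (w i - w j)) • v := by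
    intro i
    simp only [hp, add_sub_add_left_eq_sub, ← sub_smul, smul_smul, Finset.sum_smul]
  simp only [IsK3Stress, hsum, smul_eq_zero, hv, or_false]

theorem isK3Stress_iff_eq_smul {p : Fin 3 → EuclideanSpace ℝ (Fin 2)}
    {x v : EuclideanSpace ℝ (Fin 2)} {t : ℝ} (hv : v ≠ 0) (ht : t ≠ 1)
    (hp : ∀ i, p i = x + ![0, t, 1] i • v) {s : Fin 3 → Fin 3 → ℝ} :
    IsK3Stress p s ↔ ∃ l : ℝ, s = l • k3Weights (1 - t) t (-(t * (1 - t))) := by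
  have ht' : 1 - t ≠ 0 := sub_ne_zero.2 ht.symm
  rw [isK3Stress_iff_of_eq_add_smul hv hp]
  constructor
  · rintro ⟨hsym, hdiag, heq⟩
    have e0 : s 0 1 * t + s 0 2 = 0 := by
      have := heq 0
      simp [Fin.sum_univ_three, hdiag] at this
      linarith
    have e1 : s 0 1 * t = s 1 2 * (1 - t) := by
      have := heq 1
      simp [Fin.sum_univ_three, hdiag, hsym 1 0] at this
      linarith
    refine ⟨s 0 1 / (1 - t), ?_⟩
    refine (eq_k3Weights hsym hdiag).trans ?_
    rw [smul_k3Weights]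
    refine congr (congr (congrArg k3Weights ?_) ?_) ?_ <;> field_simp <;> linarith
  · rintro ⟨l, rfl⟩
    refine ⟨?_, ?_, ?_⟩
    · intro i j
      fin_cases i <;> fin_cases j <;> simp [k3Weights]
    · intro i
      fin_cases i <;> simp [k3Weights]
    · intro i
      fin_cases i <;> simp [k3Weights, Fin.sum_univ_three] <;> ring

theorem sign_of_eq_smul_k3Weights {s : Fin 3 → Fin 3 → ℝ} {l t : ℝ} (hl : l ≠ 0)
    (ht0 : 0 < t) (ht1 : t < 1) (hs : s = l • k3Weights (1 - t) t (-(t * (1 - t)))) :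
    SignType.sign (s 0 1) = SignType.sign (s 1 2) ∧
      SignType.sign (s 0 1) = -SignType.sign (s 0 2) ∧
      s 0 1 ≠ 0 ∧ s 1 2 ≠ 0 ∧ s 0 2 ≠ 0 := by
  have ht' : 0 < 1 - t := sub_pos.2 ht1
  rw [hs, smul_k3Weights]
  simp only [k3Weights, Matrix.cons_val_zero, Matrix.cons_val_one,
    Matrix.cons_val_two, Matrix.head_cons, Matrix.tail_cons]
  refine ⟨?_, ?_, mul_ne_zero hl ht'.ne', mul_ne_zero hl ht0.ne',
    mul_ne_zero hl (neg_ne_zero.2 (mul_pos ht0 ht').ne')⟩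
  · rw [sign_mul, sign_mul, sign_pos ht', sign_pos ht0]
  · rw [mul_neg, Left.sign_neg, neg_neg, sign_mul, sign_mul, sign_pos ht',
      sign_pos (mul_pos ht0 ht')]

theorem K3_collinear_stress_general
    (p : Fin 3 → EuclideanSpace ℝ (Fin 2))
    (hbtw : Sbtw ℝ (p 0) (p 1) (p 2)) :
    (∃ s₀ : Fin 3 → Fin 3 → ℝ, IsK3Stress p s₀ ∧ s₀ ≠ 0 ∧
        ∀ s : Fin 3 → Fin 3 → ℝ, IsK3Stress p s → ∃ c : ℝ, s = c • s₀) ∧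
    (∀ s : Fin 3 → Fin 3 → ℝ, IsK3Stress p s → s ≠ 0 →
        SignType.sign (s 0 1) = SignType.sign (s 1 2) ∧
        SignType.sign (s 0 1) = -SignType.sign (s 0 2) ∧
        s 0 1 ≠ 0 ∧ s 1 2 ≠ 0 ∧ s 0 2 ≠ 0) := by
  obtain ⟨t, ⟨ht0, ht1⟩, hp1⟩ := hbtw.mem_image_Ioo
  have hp : ∀ i, p i = p 0 + ![0, t, 1] i • (p 2 - p 0) := by
    intro i
    fin_cases i <;> simp [← hp1, AffineMap.lineMap_apply_module', add_comm]
  have hstress := fun s ↦ isK3Stress_iff_eq_smul (s := s)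
    (sub_ne_zero.2 hbtw.left_ne_right.symm) ht1.ne hp
  refine ⟨⟨_, (hstress _).2 ⟨1, (one_smul _ _).symm⟩, fun h ↦ ?_, fun s ↦ (hstress s).1⟩, ?_⟩
  · simpa [k3Weights, (sub_pos.2 ht1).ne'] using congrFun (congrFun h 0) 1
  · rintro s hs hs0
    obtain ⟨l, hl⟩ := (hstress s).1 hs
    refine sign_of_eq_smul_k3Weights (fun hl0 ↦ hs0 ?_) ht0 ht1 hl
    rw [hl, hl0, zero_smul]

/-- Three pairwise distinct collinear points, the middle one strictly between the other
two, yield a one-dimensional space of equilibrium stresses on `K₃`, and every nonzero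
stress satisfies `sign s₁₂ = sign s₂₃ = -sign s₁₃`, all values nonzero. -/
theorem K3_collinear_stress
    (p : Fin 3 → EuclideanSpace ℝ (Fin 2))
    (h01 : p 0 ≠ p 1) (h02 : p 0 ≠ p 2) (h12 : p 1 ≠ p 2)
    (hcol : Collinear ℝ {p 0, p 1, p 2})
    (hbtw : Sbtw ℝ (p 0) (p 1) (p 2)) :
    (∃ s₀ : Fin 3 → Fin 3 → ℝ, IsK3Stress p s₀ ∧ s₀ ≠ 0 ∧
        ∀ s : Fin 3 → Fin 3 → ℝ, IsK3Stress p s → ∃ c : ℝ, s = c • s₀) ∧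
    (∀ s : Fin 3 → Fin 3 → ℝ, IsK3Stress p s → s ≠ 0 →
        SignType.sign (s 0 1) = SignType.sign (s 1 2) ∧
        SignType.sign (s 0 1) = -SignType.sign (s 0 2) ∧
        s 0 1 ≠ 0 ∧ s 1 2 ≠ 0 ∧ s 0 2 ≠ 0) :=
  K3_collinear_stress_general p hbtw
end

section
/- Let a, b, c, a', b', c' ∈ ℝ² be six pairwise distinct points such that a, b, c are affinely independent, a', b', c' are affinely independent, and the three lines through a and a', through b and b', and through c and c' pass through a common point o distinct from all six points, with no two of the nine points {a,b,c,a',b',c',o} creating degenerate incidences (i.e. a' ∉ line(b,c) etc. and the configuration is otherwise generic). Then the graph with vertex set {a, b, c, a', b', c'} and the nine edges ab, bc, ca, a'b', b'c', c'a', aa', bb', cc', realized by these points, admits a nonzero equilibrium stress. -/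
/-!
Three vectors in the plane satisfy a nontrivial relation `α (a - o) + β (b - o) + γ (c - o) = 0`;
if `a₁ - o = tₐ (a - o)` etc., the outer triangle satisfies it with weights `α₁ = α / tₐ, β₁, γ₁`.
For such a relation with `σ = α + β + γ`, `αβ (a - b) + αγ (a - c) = ασ (a - o)`: a triangle
stressed by `-αβ, -βγ, -γα` pushes its vertices radially from `o`. Stressing the inner triangle by
`-σ₁ αβ, …`, the outer one by `σ α₁β₁, …` (with `σ₁ = α₁ + β₁ + γ₁`) and the spoke `aa₁` by
`ασσ₁ / (1 - tₐ)`, … balances all six vertices. Affine independence of the two triangles forces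
`σ ≠ 0` and `σ₁ ≠ 0`, so some spoke carries a nonzero stress.
-/

open Module

variable {k V : Type*} [Field k] [AddCommGroup V] [Module k V]

theorem Collinear.exists_sub_eq_smul_sub {o a p : V} (h : Collinear k {o, a, p})
    (hoa : o ≠ a) (hop : o ≠ p) (hap : a ≠ p) :
    ∃ t : k, t ≠ 0 ∧ t ≠ 1 ∧ p - o = t • (a - o) := by
  obtain ⟨t, rfl⟩ := mem_affineSpan_pair_iff_exists_lineMap_eq.1 <|
    h.mem_affineSpan_of_mem_of_ne (p₃ := p) (by simp) (by simp) (by simp) hoa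
  refine ⟨t, ?_, ?_, by simp [AffineMap.lineMap_apply_module']⟩
  · rintro rfl
    simp at hop
  · rintro rfl
    simp at hap

theorem exists_smul_add_smul_add_smul_eq_zero [FiniteDimensional k V] (hV : finrank k V ≤ 2)
    (u v w : V) : ∃ α β γ : k, α • u + β • v + γ • w = 0 ∧ ¬(α = 0 ∧ β = 0 ∧ γ = 0) := by
  have hdep : ¬LinearIndependent k ![u, v, w] := fun h => by
    have := h.fintype_card_le_finrank
    simp only [Fintype.card_fin] at this
    omega
  obtain ⟨g, hg, i, hi⟩ := Fintype.not_linearIndependent_iff.1 hdep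
  refine ⟨g 0, g 1, g 2, by simpa [Fin.sum_univ_three] using hg, ?_⟩
  rintro ⟨h0, h1, h2⟩
  fin_cases i <;> simp_all

theorem AffineIndependent.add_add_ne_zero {a b c o : V} (h : AffineIndependent k ![a, b, c])
    {α β γ : k} (hrel : α • (a - o) + β • (b - o) + γ • (c - o) = 0)
    (hne : ¬(α = 0 ∧ β = 0 ∧ γ = 0)) : α + β + γ ≠ 0 := by
  intro hσ
  have hw : ∑ i, ![α, β, γ] i = 0 := by simpa [Fin.sum_univ_three] using hσ
  have hw0 := (affineIndependent_iff_of_fintype (k := k) _).1 h _ hw <| by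
    rw [Finset.weightedVSub_eq_weightedVSubOfPoint_of_sum_eq_zero _ _ _ hw o]
    simpa [Finset.weightedVSubOfPoint_apply, Fin.sum_univ_three] using hrel
  exact hne ⟨hw0 0, hw0 1, hw0 2⟩

theorem div_smul_sub_eq {a p o : V} {t : k} (hp : p - o = t • (a - o)) (ht : t ≠ 0) (s : k) :
    (s / t) • (p - o) = s • (a - o) := by
  rw [hp, smul_smul, div_mul_cancel₀ _ ht]

theorem div_one_sub_smul_sub_eq {a p o : V} {t : k} (hp : p - o = t • (a - o)) (ht : t ≠ 1)
    (s : k) : (s / (1 - t)) • (a - p) = s • (a - o) := by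
  rw [show a - p = (1 - t) • (a - o) by rw [sub_smul, one_smul, ← hp]; abel, smul_smul,
    div_mul_cancel₀ _ (sub_ne_zero.2 ht.symm)]

theorem exists_nonzero_stress_of_perspective {a b c a₁ b₁ c₁ o : V} {α β γ ta tb tc : k}
    (hrel : α • (a - o) + β • (b - o) + γ • (c - o) = 0) (hne : ¬(α = 0 ∧ β = 0 ∧ γ = 0))
    (ha : a₁ - o = ta • (a - o)) (hb : b₁ - o = tb • (b - o)) (hc : c₁ - o = tc • (c - o))
    (hta₀ : ta ≠ 0) (htb₀ : tb ≠ 0) (htc₀ : tc ≠ 0)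
    (hta₁ : ta ≠ 1) (htb₁ : tb ≠ 1) (htc₁ : tc ≠ 1)
    (hσ : α + β + γ ≠ 0) (hσ₁ : α / ta + β / tb + γ / tc ≠ 0) :
    ∃ sab sbc sca sa₁b₁ sb₁c₁ sc₁a₁ saa₁ sbb₁ scc₁ : k,
      (sab • (a - b) + sca • (a - c) + saa₁ • (a - a₁) = 0) ∧
      (sab • (b - a) + sbc • (b - c) + sbb₁ • (b - b₁) = 0) ∧
      (sbc • (c - b) + sca • (c - a) + scc₁ • (c - c₁) = 0) ∧
      (sa₁b₁ • (a₁ - b₁) + sc₁a₁ • (a₁ - c₁) + saa₁ • (a₁ - a) = 0) ∧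
      (sa₁b₁ • (b₁ - a₁) + sb₁c₁ • (b₁ - c₁) + sbb₁ • (b₁ - b) = 0) ∧
      (sb₁c₁ • (c₁ - b₁) + sc₁a₁ • (c₁ - a₁) + scc₁ • (c₁ - c) = 0) ∧
      ¬(sab = 0 ∧ sbc = 0 ∧ sca = 0 ∧ sa₁b₁ = 0 ∧ sb₁c₁ = 0 ∧ sc₁a₁ = 0 ∧
        saa₁ = 0 ∧ sbb₁ = 0 ∧ scc₁ = 0) := by
  have hα := div_smul_sub_eq ha hta₀ α
  have hβ := div_smul_sub_eq hb htb₀ β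
  have hγ := div_smul_sub_eq hc htc₀ γ
  generalize hσdef : α + β + γ = σ at hσ
  generalize hσ₁def : α / ta + β / tb + γ / tc = σ₁ at hσ₁
  generalize α / ta = α₁ at hα hσ₁def
  generalize β / tb = β₁ at hβ hσ₁def
  generalize γ / tc = γ₁ at hγ hσ₁def
  have hrel₁ : α₁ • (a₁ - o) + β₁ • (b₁ - o) + γ₁ • (c₁ - o) = 0 := by rwa [hα, hβ, hγ]
  have sa := div_one_sub_smul_sub_eq ha hta₁ (α * σ * σ₁)
  have sb := div_one_sub_smul_sub_eq hb htb₁ (β * σ * σ₁)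
  have sc := div_one_sub_smul_sub_eq hc htc₁ (γ * σ * σ₁)
  refine ⟨-(α * β * σ₁), -(β * γ * σ₁), -(γ * α * σ₁), α₁ * β₁ * σ, β₁ * γ₁ * σ, γ₁ * α₁ * σ,
    α * σ * σ₁ / (1 - ta), β * σ * σ₁ / (1 - tb), γ * σ * σ₁ / (1 - tc), ?_, ?_, ?_, ?_, ?_, ?_, ?_⟩
  · linear_combination (norm := module) sa + (α * σ₁) • hrel - (α * σ₁) • hσdef • (a - o)
  · linear_combination (norm := module) sb + (β * σ₁) • hrel - (β * σ₁) • hσdef • (b - o)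
  · linear_combination (norm := module) sc + (γ * σ₁) • hrel - (γ * σ₁) • hσdef • (c - o)
  · linear_combination (norm := module)
      (σ * σ₁) • hα - sa - (σ * α₁) • hrel₁ + (σ * α₁) • hσ₁def • (a₁ - o)
  · linear_combination (norm := module)
      (σ * σ₁) • hβ - sb - (σ * β₁) • hrel₁ + (σ * β₁) • hσ₁def • (b₁ - o)
  · linear_combination (norm := module)
      (σ * σ₁) • hγ - sc - (σ * γ₁) • hrel₁ + (σ * γ₁) • hσ₁def • (c₁ - o)
  · rintro ⟨-, -, -, -, -, -, hsa, hsb, hsc⟩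
    simp only [div_eq_zero_iff, mul_eq_zero, sub_eq_zero, hσ, hσ₁, hta₁.symm, htb₁.symm,
      htc₁.symm, or_false] at hsa hsb hsc
    exact hne ⟨hsa, hsb, hsc⟩

theorem desargues_configuration_stressable_general
    (a b c a₁ b₁ c₁ o : EuclideanSpace ℝ (Fin 2))
    (hpd : List.Pairwise (· ≠ ·) [a, b, c, a₁, b₁, c₁])
    (ho : o ∉ ([a, b, c, a₁, b₁, c₁] : List (EuclideanSpace ℝ (Fin 2))))
    (habc : AffineIndependent ℝ ![a, b, c])
    (habc₁ : AffineIndependent ℝ ![a₁, b₁, c₁])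
    (hoa : Collinear ℝ {o, a, a₁}) (hob : Collinear ℝ {o, b, b₁})
    (hoc : Collinear ℝ {o, c, c₁}) :
    ∃ sab sbc sca sa₁b₁ sb₁c₁ sc₁a₁ saa₁ sbb₁ scc₁ : ℝ,
      (sab • (a - b) + sca • (a - c) + saa₁ • (a - a₁) = 0) ∧
      (sab • (b - a) + sbc • (b - c) + sbb₁ • (b - b₁) = 0) ∧
      (sbc • (c - b) + sca • (c - a) + scc₁ • (c - c₁) = 0) ∧
      (sa₁b₁ • (a₁ - b₁) + sc₁a₁ • (a₁ - c₁) + saa₁ • (a₁ - a) = 0) ∧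
      (sa₁b₁ • (b₁ - a₁) + sb₁c₁ • (b₁ - c₁) + sbb₁ • (b₁ - b) = 0) ∧
      (sb₁c₁ • (c₁ - b₁) + sc₁a₁ • (c₁ - a₁) + scc₁ • (c₁ - c) = 0) ∧
      ¬(sab = 0 ∧ sbc = 0 ∧ sca = 0 ∧ sa₁b₁ = 0 ∧ sb₁c₁ = 0 ∧ sc₁a₁ = 0 ∧
        saa₁ = 0 ∧ sbb₁ = 0 ∧ scc₁ = 0) := by
  simp only [List.pairwise_cons, List.mem_cons, List.not_mem_nil, not_or, List.Pairwise.nil,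
    forall_eq_or_imp, IsEmpty.forall_iff, implies_true, and_true] at hpd ho
  obtain ⟨⟨-, -, haa₁, -⟩, ⟨-, -, hbb₁, -⟩, ⟨-, -, hcc₁⟩, -⟩ := hpd
  obtain ⟨hao, hbo, hco, ha₁o, hb₁o, hc₁o, -⟩ := ho
  obtain ⟨ta, hta₀, hta₁, ha⟩ := hoa.exists_sub_eq_smul_sub hao ha₁o haa₁
  obtain ⟨tb, htb₀, htb₁, hb⟩ := hob.exists_sub_eq_smul_sub hbo hb₁o hbb₁
  obtain ⟨tc, htc₀, htc₁, hc⟩ := hoc.exists_sub_eq_smul_sub hco hc₁o hcc₁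
  obtain ⟨α, β, γ, hrel, hne⟩ :=
    exists_smul_add_smul_add_smul_eq_zero finrank_euclideanSpace_fin.le (a - o) (b - o) (c - o)
  have hrel₁ : (α / ta) • (a₁ - o) + (β / tb) • (b₁ - o) + (γ / tc) • (c₁ - o) = 0 := by
    rwa [div_smul_sub_eq ha hta₀, div_smul_sub_eq hb htb₀, div_smul_sub_eq hc htc₀]
  have hne₁ : ¬(α / ta = 0 ∧ β / tb = 0 ∧ γ / tc = 0) := by
    simpa only [div_eq_zero_iff, hta₀, htb₀, htc₀, or_false] using hne
  exact exists_nonzero_stress_of_perspective hrel hne ha hb hc hta₀ htb₀ htc₀ hta₁ htb₁ htc₁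
    (habc.add_add_ne_zero hrel hne) (habc₁.add_add_ne_zero hrel₁ hne₁)

/-- Lemma 2(1), Desargues configurations: two triangles `a b c` and `a₁ b₁ c₁` in
perspective from a point `o` (distinct from the six vertices, with the configuration
otherwise generic) form a stressable framework: the graph with the nine edges
`ab, bc, ca, a₁b₁, b₁c₁, c₁a₁, aa₁, bb₁, cc₁` admits a nonzero equilibrium stress. -/
theorem desargues_configuration_stressable
    (a b c a₁ b₁ c₁ o : EuclideanSpace ℝ (Fin 2))
    (hpd : List.Pairwise (· ≠ ·) [a, b, c, a₁, b₁, c₁])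
    (ho : o ∉ ([a, b, c, a₁, b₁, c₁] : List (EuclideanSpace ℝ (Fin 2))))
    (habc : AffineIndependent ℝ ![a, b, c])
    (habc₁ : AffineIndependent ℝ ![a₁, b₁, c₁])
    (hoa : Collinear ℝ {o, a, a₁}) (hob : Collinear ℝ {o, b, b₁})
    (hoc : Collinear ℝ {o, c, c₁})
    (ha₁ : a₁ ∉ affineSpan ℝ ({b, c} : Set (EuclideanSpace ℝ (Fin 2))))
    (hb₁ : b₁ ∉ affineSpan ℝ ({a, c} : Set (EuclideanSpace ℝ (Fin 2))))
    (hc₁ : c₁ ∉ affineSpan ℝ ({a, b} : Set (EuclideanSpace ℝ (Fin 2))))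
    (ha : a ∉ affineSpan ℝ ({b₁, c₁} : Set (EuclideanSpace ℝ (Fin 2))))
    (hb : b ∉ affineSpan ℝ ({a₁, c₁} : Set (EuclideanSpace ℝ (Fin 2))))
    (hc : c ∉ affineSpan ℝ ({a₁, b₁} : Set (EuclideanSpace ℝ (Fin 2)))) :
    ∃ sab sbc sca sa₁b₁ sb₁c₁ sc₁a₁ saa₁ sbb₁ scc₁ : ℝ,
      (sab • (a - b) + sca • (a - c) + saa₁ • (a - a₁) = 0) ∧
      (sab • (b - a) + sbc • (b - c) + sbb₁ • (b - b₁) = 0) ∧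
      (sbc • (c - b) + sca • (c - a) + scc₁ • (c - c₁) = 0) ∧
      (sa₁b₁ • (a₁ - b₁) + sc₁a₁ • (a₁ - c₁) + saa₁ • (a₁ - a) = 0) ∧
      (sa₁b₁ • (b₁ - a₁) + sb₁c₁ • (b₁ - c₁) + sbb₁ • (b₁ - b) = 0) ∧
      (sb₁c₁ • (c₁ - b₁) + sc₁a₁ • (c₁ - a₁) + scc₁ • (c₁ - c) = 0) ∧
      ¬(sab = 0 ∧ sbc = 0 ∧ sca = 0 ∧ sa₁b₁ = 0 ∧ sb₁c₁ = 0 ∧ sc₁a₁ = 0 ∧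
        saa₁ = 0 ∧ sbb₁ = 0 ∧ scc₁ = 0) :=
  desargues_configuration_stressable_general a b c a₁ b₁ c₁ o hpd ho habc habc₁ hoa hob hoc
end
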